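/- arXiv:1810.07936 — 4 statements merged into one kernel-verified Lean document; each statement's English description precedes it below -/
import Mathlib

section
/- For a strictly increasing sequence of integers a_0 = 0 < a_1 < ... < a_n and q a positive real number (q ≠ 1), the determinant of the (n+1)×(n+1) matrix with entries A_{i,j} = [a_i + j choose j]_q equals q^{n(n+1)(2n+1)/6} times the ratio of Vandermonde determinants Δ(q^{a_0}, q^{a_1}, ..., q^{a_n}) / Δ(1, q, q^2, ..., q^n), where Δ(x_0,...,x_n) = prod_{i<j}(x_j - x_i). -/
open Finset

/-- The Gaussian (q-)binomial coefficient `[a choose b]_q`. -/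
noncomputable def qbinom (q : ℝ) (a b : ℕ) : ℝ :=
  if b ≤ a then ∏ s ∈ Finset.Icc 1 b, (q ^ (s + a - b) - 1) / (q ^ s - 1) else 0

/-- The Vandermonde product `Δ(x_0,…,x_{m-1}) = ∏_{i<j} (x_j - x_i)`. -/
noncomputable def vand {m : ℕ} (x : Fin m → ℝ) : ℝ :=
  ∏ p ∈ Finset.univ.filter (fun p : Fin m × Fin m => p.1 < p.2), (x p.2 - x p.1)

/-!
Write `p_j(X) = ∏_{s=1}^{j} (X - q^{-s})`, a monic polynomial of degree `j`. Multiplying the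
numerator and denominator of each factor of the `q`-binomial by `q^s` gives
`[m + j choose j]_q = p_j(q^m) / p_j(1)`. After pulling the column factors `1 / p_j(1)` out, the
determinant is `det (p_j(q^{a_i}))`, which equals the Vandermonde determinant
`Δ(q^{a_0}, …, q^{a_n})` because the `p_j` are monic of degree `j`. Finally
`q^j - q^i = q^j (1 - q^{-(j-i)})` gives `Δ(1, q, …, q^n) = ∏_j q^{j^2} p_j(1)`.
-/

open Polynomial

noncomputable def prodXSubPow {R : Type*} [CommRing R] (r : R) (j : ℕ) : R[X] :=
  ∏ s ∈ Icc 1 j, (X - C (r ^ s))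

section prodXSubPow

variable {R : Type*} [CommRing R] (r : R) (j : ℕ)

lemma monic_prodXSubPow : (prodXSubPow r j).Monic :=
  monic_prod_of_monic _ _ fun _ _ => monic_X_sub_C _

lemma natDegree_prodXSubPow [Nontrivial R] : (prodXSubPow r j).natDegree = j := by
  rw [prodXSubPow, natDegree_prod_of_monic _ _ fun _ _ => monic_X_sub_C _]
  simp only [natDegree_X_sub_C, sum_const, Nat.card_Icc, smul_eq_mul, mul_one, Nat.add_sub_cancel]

@[simp]
lemma eval_prodXSubPow (x : R) : (prodXSubPow r j).eval x = ∏ s ∈ Icc 1 j, (x - r ^ s) := by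
  simp [prodXSubPow, eval_prod]

end prodXSubPow

lemma eval_one_prodXSubPow_ne_zero {R : Type*} [CommRing R] [LinearOrder R]
    [IsStrictOrderedRing R] {r : R} (hr0 : 0 ≤ r) (hr1 : r ≠ 1) (j : ℕ) :
    (prodXSubPow r j).eval 1 ≠ 0 := by
  rw [eval_prodXSubPow]
  refine prod_ne_zero_iff.2 fun s hs => sub_ne_zero.2 fun h => hr1 ?_
  exact (pow_eq_one_iff_of_nonneg hr0 (by simp at hs; omega)).1 h.symm

lemma qbinom_add_eq_eval_div_eval {q : ℝ} (hq : q ≠ 0) (m j : ℕ) :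
    qbinom q (m + j) j = (prodXSubPow q⁻¹ j).eval (q ^ m) / (prodXSubPow q⁻¹ j).eval 1 := by
  rw [qbinom, if_pos (Nat.le_add_left j m), eval_prodXSubPow, eval_prodXSubPow, ← prod_div_distrib]
  refine prod_congr rfl fun s _ => ?_
  rw [← mul_div_mul_left _ (1 - q⁻¹ ^ s) (pow_ne_zero s hq), mul_sub, mul_sub, mul_one,
    ← mul_pow, mul_inv_cancel₀ hq, one_pow, ← pow_add, Nat.add_sub_assoc (Nat.le_add_left j m),
    Nat.add_sub_cancel]

lemma prod_range_pow_sub_pow {K : Type*} [Field K] {q : K} (hq : q ≠ 0) (j : ℕ) :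
    ∏ i ∈ range j, (q ^ j - q ^ i) = q ^ (j * j) * (prodXSubPow q⁻¹ j).eval 1 := by
  have hfactor : ∀ i ∈ range j, q ^ j - q ^ i = q ^ j * (1 - q⁻¹ ^ (j - i)) := by
    intro i hi
    rw [mul_sub, mul_one, inv_pow, ← div_eq_mul_inv]
    congr 1
    rw [eq_div_iff (pow_ne_zero _ hq), ← pow_add,
      Nat.add_sub_cancel' (mem_range.1 hi).le]
  rw [prod_congr rfl hfactor, prod_mul_distrib, prod_const, card_range, ← pow_mul,
    eval_prodXSubPow]
  congr 1
  refine prod_nbij' (j - ·) (j - ·) ?_ ?_ ?_ ?_ ?_ <;> intro i hi <;> simp at hi ⊢ <;> omega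

lemma vand_eq_det_vandermonde {m : ℕ} (x : Fin m → ℝ) : vand x = (Matrix.vandermonde x).det := by
  rw [Matrix.det_vandermonde, vand, prod_filter, Fintype.prod_prod_type]
  refine prod_congr rfl fun i _ => ?_
  rw [← prod_filter, filter_lt_eq_Ioi]

lemma vand_pow_eq_prod_range (y : ℝ) (m : ℕ) :
    vand (fun i : Fin m => y ^ (i : ℕ)) = ∏ j ∈ range m, ∏ i ∈ range j, (y ^ j - y ^ i) := by
  rw [vand, prod_filter, Fintype.prod_prod_type, prod_comm, ← Fin.prod_univ_eq_prod_range]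
  refine prod_congr rfl fun j _ => ?_
  rw [← prod_filter, filter_gt_eq_Iio, ← Nat.Iio_eq_range, ← Fin.map_valEmbedding_Iio, prod_map]
  rfl

lemma det_eval_div_eq_vand {m : ℕ} (x : Fin m → ℝ) (p : Fin m → ℝ[X])
    (hdeg : ∀ j, (p j).natDegree = j) (hmonic : ∀ j, (p j).Monic) (d : Fin m → ℝ) :
    (Matrix.of fun i j => (p j).eval (x i) / d j).det = vand x / ∏ j, d j := by
  calc (Matrix.of fun i j => (p j).eval (x i) / d j).det
      = (Matrix.of fun i j => (d j)⁻¹ * (p j).eval (x i)).det := by simp only [div_eq_inv_mul]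
    _ = (∏ j, (d j)⁻¹) * (Matrix.of fun i j => (p j).eval (x i)).det := Matrix.det_mul_row _ _
    _ = vand x / ∏ j, d j := by
      rw [← Matrix.det_eval_matrixOfPolynomials_eq_det_vandermonde x p hdeg hmonic,
        ← vand_eq_det_vandermonde, prod_inv_distrib, inv_mul_eq_div]

lemma sum_range_succ_sq_mul_six (n : ℕ) :
    (∑ j ∈ range (n + 1), j ^ 2) * 6 = n * (n + 1) * (2 * n + 1) := by
  induction n with
  | zero => simp
  | succ m ih => rw [sum_range_succ, add_mul, ih]; ring

theorem stmt2_general (n : ℕ) (a : ℕ → ℕ) (q : ℝ) (hq0 : 0 < q) (hq1 : q ≠ 1) :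
    Matrix.det (Matrix.of fun i j : Fin (n + 1) => qbinom q (a i + j) j) =
      q ^ (n * (n + 1) * (2 * n + 1) / 6) *
        (vand (fun i : Fin (n + 1) => q ^ a i) /
          vand (fun i : Fin (n + 1) => q ^ (i : ℕ))) := by
  set P : Fin (n + 1) → ℝ[X] := fun j => prodXSubPow q⁻¹ j
  have hP1 : ∀ j, (P j).eval 1 ≠ 0 := fun j =>
    eval_one_prodXSubPow_ne_zero (inv_nonneg.2 hq0.le) (inv_ne_one.2 hq1) j
  have hentries : (Matrix.of fun i j : Fin (n + 1) => qbinom q (a i + j) j)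
      = Matrix.of fun i j : Fin (n + 1) => (P j).eval (q ^ a i) / (P j).eval 1 := by
    ext i j; exact qbinom_add_eq_eval_div_eval hq0.ne' _ _
  have hvand_pow : vand (fun i : Fin (n + 1) => q ^ (i : ℕ))
      = q ^ (∑ j ∈ range (n + 1), j ^ 2) * ∏ j, (P j).eval 1 := by
    rw [vand_pow_eq_prod_range, prod_congr rfl fun j _ => prod_range_pow_sub_pow hq0.ne' j,
      prod_mul_distrib, prod_pow_eq_pow_sum,
      Fin.prod_univ_eq_prod_range (fun j => (prodXSubPow q⁻¹ j).eval 1)]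
    simp only [sq]
  have hexp : ∑ j ∈ range (n + 1), j ^ 2 = n * (n + 1) * (2 * n + 1) / 6 := by
    rw [← sum_range_succ_sq_mul_six, Nat.mul_div_cancel _ (by norm_num)]
  rw [hentries, det_eval_div_eq_vand _ _ (fun _ => natDegree_prodXSubPow _ _)
    (fun _ => monic_prodXSubPow _ _), hvand_pow, ← hexp]
  field_simp

/-- For a strictly increasing integer sequence `a_0 = 0 < a_1 < … < a_n` and `0 < q ≠ 1`,
the determinant of the matrix `A_{i,j} = [a_i + j choose j]_q` equals
`q^{n(n+1)(2n+1)/6} · Δ(q^{a_0},…,q^{a_n}) / Δ(1,q,…,q^n)`. -/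
theorem stmt2 (n : ℕ) (a : ℕ → ℕ) (ha0 : a 0 = 0) (hmono : StrictMono a)
    (q : ℝ) (hq0 : 0 < q) (hq1 : q ≠ 1) :
    Matrix.det (Matrix.of fun i j : Fin (n + 1) => qbinom q (a i + j) j) =
      q ^ (n * (n + 1) * (2 * n + 1) / 6) *
        (vand (fun i : Fin (n + 1) => q ^ a i) /
          vand (fun i : Fin (n + 1) => q ^ (i : ℕ))) :=
  stmt2_general n a q hq0 hq1
end

section
/- With M as in the previous statement and A_{i,j} = [a_i+j choose j]_q, the product U = M·A is upper triangular, and its diagonal entries are U_{i,i} = q^{i^2} · prod_{s=0}^{i-1} (q^{a_i}-q^{a_s})/(q^i-q^s). -/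
open Finset

open Polynomial in
lemma coeff_basis_eq (s : Finset ℕ) (v : ℕ → ℝ) (k : ℕ) (hk : k ∈ s) :
    (Lagrange.basis s v k).coeff (#s - 1) = Lagrange.nodalWeight s v k := by
  have hb : Lagrange.basis s v k
      = C (Lagrange.nodalWeight s v k) * Lagrange.nodal (s.erase k) v := by
    simp_rw [Lagrange.basis, Lagrange.basisDivisor, Lagrange.nodalWeight, prod_mul_distrib,
      map_prod, Lagrange.nodal]
  have hcard : #(s.erase k) = #s - 1 := card_erase_of_mem hk
  have h1 : (Lagrange.nodal (s.erase k) v).coeff (#s - 1) = 1 := by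
    have hm := Lagrange.nodal_monic (s := s.erase k) (v := v)
    have hnd : (Lagrange.nodal (s.erase k) v).natDegree = #s - 1 := by
      rw [Lagrange.natDegree_nodal, hcard]
    rw [← hnd]
    exact hm.coeff_natDegree
  rw [hb, coeff_C_mul, h1, mul_one]

open Polynomial in
lemma divided_diff (s : Finset ℕ) (v : ℕ → ℝ) (hvs : Set.InjOn v s) (P : Polynomial ℝ)
    (hP : P.degree < #s) :
    ∑ k ∈ s, Lagrange.nodalWeight s v k * P.eval (v k) = P.coeff (#s - 1) := by
  rcases s.eq_empty_or_nonempty with h | hne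
  · subst h; simp at hP; simp [hP]
  have h := Lagrange.eq_interpolate hvs hP
  conv_rhs => rw [h]
  rw [Lagrange.interpolate_apply, finset_sum_coeff]
  refine Finset.sum_congr rfl fun k hk => ?_
  rw [coeff_C_mul, coeff_basis_eq _ _ _ hk]
  ring

lemma prod_Icc_one' (f : ℕ → ℝ) (j : ℕ) : ∏ s ∈ Icc 1 j, f s = ∏ s ∈ range j, f (s + 1) := by
  induction j with
  | zero => simp
  | succ m ih =>
      rw [Finset.prod_Icc_succ_top (Nat.succ_le_succ (Nat.zero_le m)), ih, prod_range_succ]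

open Polynomial in
/-- the polynomial whose value at `q^m` is `qbinom q (m+j) j` -/
noncomputable def qpoly (q : ℝ) (j : ℕ) : Polynomial ℝ :=
  C ((∏ s ∈ Icc 1 j, (q ^ s - 1))⁻¹) * ∏ s ∈ Icc 1 j, (C (q ^ s) * X + C (-1))

open Polynomial in
lemma qpoly_eval (q : ℝ) (j m : ℕ) :
    (qpoly q j).eval (q ^ m) = qbinom q (m + j) j := by
  rw [qbinom, if_pos (Nat.le_add_left j m)]
  rw [qpoly, eval_mul, eval_C, eval_prod]
  rw [prod_div_distrib]
  rw [div_eq_mul_inv, mul_comm]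
  congr 1
  refine Finset.prod_congr rfl fun s hs => ?_
  have hsub : s + (m + j) - j = s + m := by omega
  rw [hsub, eval_add, eval_mul, eval_C, eval_X, eval_C, pow_add]
  ring

open Polynomial in
lemma qpoly_degree_le (q : ℝ) (j : ℕ) : (qpoly q j).degree ≤ j := by
  rw [qpoly]
  refine le_trans (degree_mul_le _ _) ?_
  have h1 : (∏ s ∈ Icc 1 j, (C (q ^ s) * X + C (-1) : Polynomial ℝ)).degree ≤ j := by
    refine le_trans (degree_prod_le _ _) ?_
    calc ∑ s ∈ Icc 1 j, (C (q ^ s) * X + C (-1) : Polynomial ℝ).degree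
        ≤ ∑ s ∈ Icc 1 j, (1 : WithBot ℕ) := Finset.sum_le_sum fun s _ => degree_linear_le
      _ = (#(Icc 1 j) : WithBot ℕ) := by simp
      _ = (j : WithBot ℕ) := by rw [Nat.card_Icc]; norm_num
  calc (C ((∏ s ∈ Icc 1 j, (q ^ s - 1))⁻¹) : Polynomial ℝ).degree
        + (∏ s ∈ Icc 1 j, (C (q ^ s) * X + C (-1) : Polynomial ℝ)).degree
      ≤ 0 + (j : WithBot ℕ) := add_le_add degree_C_le h1
    _ = (j : WithBot ℕ) := by rw [zero_add]

open Polynomial in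
lemma qpoly_coeff (q : ℝ) (hq0 : 0 < q) (j : ℕ) :
    (qpoly q j).coeff j = (∏ s ∈ Icc 1 j, (q ^ s - 1))⁻¹ * ∏ s ∈ Icc 1 j, q ^ s := by
  rw [qpoly, coeff_C_mul]
  congr 1
  have hne : ∀ s ∈ Icc 1 j, (C (q ^ s) * X + C (-1) : Polynomial ℝ) ≠ 0 := by
    intro s _ h
    have h2 := congrArg (fun p => Polynomial.eval 0 p) h
    simp at h2
  have hnd : (∏ s ∈ Icc 1 j, (C (q ^ s) * X + C (-1) : Polynomial ℝ)).natDegree = j := by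
    rw [natDegree_prod _ _ hne]
    rw [Finset.sum_congr rfl fun s _ => natDegree_linear (pow_ne_zero s (ne_of_gt hq0))]
    simp [Nat.card_Icc]
  calc (∏ s ∈ Icc 1 j, (C (q ^ s) * X + C (-1) : Polynomial ℝ)).coeff j
      = (∏ s ∈ Icc 1 j, (C (q ^ s) * X + C (-1) : Polynomial ℝ)).leadingCoeff := by
        rw [leadingCoeff, hnd]
    _ = ∏ s ∈ Icc 1 j, q ^ s := by
        rw [leadingCoeff_prod]
        exact Finset.prod_congr rfl fun s _ =>
          leadingCoeff_linear (pow_ne_zero s (ne_of_gt hq0))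

/-- With `M` the uni-lower-triangular matrix of the LU decomposition and
`A_{i,j} = [a_i + j choose j]_q`, the product `U = M·A` is upper triangular, with
diagonal entries `U_{i,i} = q^{i²} ∏_{s=0}^{i-1} (q^{a_i}-q^{a_s})/(q^i-q^s)`. -/
theorem stmt4 (n : ℕ) (a : ℕ → ℕ) (ha0 : a 0 = 0) (hmono : StrictMono a)
    (q : ℝ) (hq0 : 0 < q) (hq : ∀ m : ℕ, 0 < m → q ^ m ≠ 1) :
    let M : Matrix (Fin (n + 1)) (Fin (n + 1)) ℝ := fun i j =>
      if (j : ℕ) ≤ (i : ℕ) then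
        (∏ s ∈ Finset.range (i : ℕ), (q ^ a i - q ^ a s)) /
          (∏ s ∈ (Finset.range ((i : ℕ) + 1)).erase (j : ℕ), (q ^ a (j : ℕ) - q ^ a s))
      else 0
    let A : Matrix (Fin (n + 1)) (Fin (n + 1)) ℝ := fun i j => qbinom q (a i + j) j
    let U := M * A
    (∀ i j : Fin (n + 1), (j : ℕ) < (i : ℕ) → U i j = 0) ∧
    (∀ i : Fin (n + 1), U i i =
      q ^ ((i : ℕ) ^ 2) *
        ∏ s ∈ Finset.range (i : ℕ), (q ^ a i - q ^ a s) / (q ^ (i : ℕ) - q ^ s)) := by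
  intro M A U
  have hqne : q ≠ 0 := ne_of_gt hq0
  have hpow : ∀ {m l : ℕ}, m < l → q ^ m ≠ q ^ l := by
    intro m l hml h
    have h2 : q ^ m * q ^ (l - m) = q ^ m * 1 := by
      rw [mul_one, ← pow_add, Nat.add_sub_cancel' (le_of_lt hml)]
      exact h.symm
    exact hq (l - m) (by omega) (mul_left_cancel₀ (pow_ne_zero m hqne) h2)
  have hvinj : ∀ {k l : ℕ}, q ^ a k = q ^ a l → k = l := by
    intro k l h
    by_contra hkl
    rcases Nat.lt_or_ge k l with h1 | h1
    · exact hpow (hmono h1) h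
    · exact hpow (hmono (lt_of_le_of_ne h1 fun h' => hkl h'.symm)) h.symm
  -- the key computation
  have key : ∀ i j : Fin (n + 1), (j : ℕ) ≤ (i : ℕ) →
      U i j = (∏ s ∈ Finset.range (i : ℕ), (q ^ a i - q ^ a s)) * (qpoly q j).coeff i := by
    intro i j hij
    have h1 : U i j = ∑ k ∈ range (n + 1),
        (if k ≤ (i : ℕ) then
          (∏ s ∈ Finset.range (i : ℕ), (q ^ a i - q ^ a s)) /
            (∏ s ∈ (Finset.range ((i : ℕ) + 1)).erase k, (q ^ a k - q ^ a s))
        else 0) * qbinom q (a k + j) j := by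
      rw [show U i j = ∑ k : Fin (n + 1), M i k * A k j from Matrix.mul_apply]
      exact Fin.sum_univ_eq_sum_range (fun k =>
        (if k ≤ (i : ℕ) then
          (∏ s ∈ Finset.range (i : ℕ), (q ^ a i - q ^ a s)) /
            (∏ s ∈ (Finset.range ((i : ℕ) + 1)).erase k, (q ^ a k - q ^ a s))
        else 0) * qbinom q (a k + j) j) (n + 1)
    rw [h1]
    rw [← Finset.sum_subset (Finset.range_subset_range.mpr (by omega : (i : ℕ) + 1 ≤ n + 1))
        (fun k _ hk => by
          rw [if_neg (by simpa using hk), zero_mul])]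
    have h2 : ∀ k ∈ range ((i : ℕ) + 1),
        (if k ≤ (i : ℕ) then
          (∏ s ∈ Finset.range (i : ℕ), (q ^ a i - q ^ a s)) /
            (∏ s ∈ (Finset.range ((i : ℕ) + 1)).erase k, (q ^ a k - q ^ a s))
        else 0) * qbinom q (a k + j) j
        = (∏ s ∈ Finset.range (i : ℕ), (q ^ a i - q ^ a s)) *
            (Lagrange.nodalWeight (range ((i : ℕ) + 1)) (fun s => q ^ a s) k *
              (qpoly q j).eval (q ^ a k)) := by
      intro k hk
      rw [if_pos (by simpa [Nat.lt_succ_iff] using hk)]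
      rw [qpoly_eval q j (a k), Lagrange.nodalWeight, Finset.prod_inv_distrib,
        div_eq_mul_inv, mul_assoc]
    rw [Finset.sum_congr rfl h2, ← Finset.mul_sum]
    congr 1
    have hdd := divided_diff (range ((i : ℕ) + 1)) (fun s => q ^ a s)
      (fun x _ y _ h => hvinj h) (qpoly q j)
      (by
        rw [card_range]
        exact lt_of_le_of_lt (qpoly_degree_le q j)
          (by exact_mod_cast Nat.lt_succ_of_le hij))
    rw [card_range, Nat.add_sub_cancel] at hdd
    exact hdd
  constructor
  · intro i j hij
    rw [key i j (le_of_lt hij),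
      Polynomial.coeff_eq_zero_of_degree_lt
        (lt_of_le_of_lt (qpoly_degree_le q j) (by exact_mod_cast hij)), mul_zero]
  · intro i
    rw [key i i le_rfl, qpoly_coeff q hq0 i]
    set m := (i : ℕ)
    have hD : (∏ s ∈ Icc 1 m, (q ^ s - 1)) ≠ 0 := by
      refine Finset.prod_ne_zero_iff.mpr fun s hs => ?_
      have : (1:ℕ) ≤ s := (Finset.mem_Icc.mp hs).1
      have := hq s (by omega)
      intro h; apply this; linarith [sub_eq_zero.mp h]
    have hE : (∏ s ∈ range m, (q ^ m - q ^ s))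
        = (∏ s ∈ range m, q ^ s) * ∏ s ∈ Icc 1 m, (q ^ s - 1) := by
      have step : ∀ s ∈ range m, q ^ m - q ^ s = q ^ s * (q ^ (m - s) - 1) := by
        intro s hs
        rw [mul_sub, mul_one, ← pow_add, Nat.add_sub_cancel' (le_of_lt (mem_range.mp hs))]
      rw [Finset.prod_congr rfl step, Finset.prod_mul_distrib]
      congr 1
      rw [prod_Icc_one' (fun s => q ^ s - 1) m]
      rw [← Finset.prod_range_reflect (fun s => q ^ (s + 1) - 1) m]
      refine Finset.prod_congr rfl fun s hs => ?_
      have : m - 1 - s + 1 = m - s := by have := mem_range.mp hs; omega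
      rw [this]
    have hQR : (∏ s ∈ Icc 1 m, q ^ s) * (∏ s ∈ range m, q ^ s) = q ^ (m ^ 2) := by
      rw [prod_Icc_one' (fun s => q ^ s) m, ← Finset.prod_mul_distrib]
      have : ∀ s ∈ range m, q ^ (s + 1) * q ^ s = q ^ (2 * s + 1) := by
        intro s _; rw [← pow_add]; congr 1; omega
      rw [Finset.prod_congr rfl this, Finset.prod_pow_eq_pow_sum]
      congr 1
      induction m with
      | zero => simp
      | succ k ih => rw [Finset.sum_range_succ, ih]; ring
    have hEne : (∏ s ∈ range m, (q ^ m - q ^ s)) ≠ 0 := by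
      rw [hE]
      exact mul_ne_zero (Finset.prod_ne_zero_iff.mpr fun s _ => pow_ne_zero s hqne) hD
    rw [Finset.prod_div_distrib, hE]
    rw [← hQR]
    field_simp
end

section
/- Define H_{n,ℓ}(q) = q^{nℓ-n(n+1)/2} sum_{k: a_k >= ℓ} res_{t=q^{a_k}} F_ℓ(t) and H̃_{n,ℓ}(q) = q^{nℓ-n(n-1)/2} sum_{k: a_k <= ℓ-n} res_{t=q^{a_k}} G_ℓ(t), where F_ℓ(t) = prod_{s=0}^{n}(t-q^{a_s})^{-1} prod_{s=1}^{n}(t q^{s-ℓ}-1) and G_ℓ(t) = prod_{s=0}^{n}(t-q^{a_s})^{-1} prod_{s=0}^{n-1}(t q^{s-ℓ}-1). Then for all 0 <= ℓ <= a_n + n, H_{n,ℓ}(q) + H̃_{n,ℓ-1}(q) = 1. -/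
/-!
For distinct nodes `v_0, …, v_n` and a polynomial `P` of degree at most `n`, the sum
`∑_k P(v_k) / ∏_{j ≠ k} (v_k - v_j)` of all finite residues of `P(t) / ∏_j (t - v_j)` is the
coefficient of `tⁿ` in `P` (minus the residue at infinity). Shifting `ℓ` by one turns the residues
of `G_{ℓ-1}` into those of `F_ℓ`, and the residues of `F_ℓ` at the poles with `ℓ - n ≤ a_k < ℓ`
vanish because a factor of the numerator cancels the pole. So `H_{n,ℓ} + H̃_{n,ℓ-1}` is the
prefactor times the sum of all residues of `F_ℓ`, namely `∏_{s=1}^n q^{s-ℓ}`, which is the inverse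
of the prefactor.
-/

open Finset

/-- `H_{n,ℓ}(q) = q^{nℓ-n(n+1)/2} ∑_{k : a_k ≥ ℓ} res_{t=q^{a_k}} F_ℓ(t)` with
`F_ℓ(t) = ∏_{s=0}^{n}(t-q^{a_s})⁻¹ ∏_{s=1}^{n}(t q^{s-ℓ}-1)`. -/
noncomputable def Hfun (q : ℝ) (n : ℕ) (a : ℕ → ℕ) (ℓ : ℤ) : ℝ :=
  q ^ ((n : ℤ) * ℓ - (n * (n + 1) / 2 : ℕ)) *
    ∑ k ∈ (Finset.range (n + 1)).filter (fun k => ℓ ≤ (a k : ℤ)),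
      (∏ s ∈ (Finset.range (n + 1)).erase k, (q ^ a k - q ^ a s))⁻¹ *
        ∏ s ∈ Finset.Icc 1 n, (q ^ (a k : ℤ) * q ^ ((s : ℤ) - ℓ) - 1)

/-- `H̃_{n,ℓ}(q) = q^{nℓ-n(n-1)/2} ∑_{k : a_k ≤ ℓ-n} res_{t=q^{a_k}} G_ℓ(t)` with
`G_ℓ(t) = ∏_{s=0}^{n}(t-q^{a_s})⁻¹ ∏_{s=0}^{n-1}(t q^{s-ℓ}-1)`. -/
noncomputable def Htilde (q : ℝ) (n : ℕ) (a : ℕ → ℕ) (ℓ : ℤ) : ℝ :=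
  q ^ ((n : ℤ) * ℓ - (n * (n - 1) / 2 : ℕ)) *
    ∑ k ∈ (Finset.range (n + 1)).filter (fun k => (a k : ℤ) ≤ ℓ - (n : ℤ)),
      (∏ s ∈ (Finset.range (n + 1)).erase k, (q ^ a k - q ^ a s))⁻¹ *
        ∏ s ∈ Finset.range n, (q ^ (a k : ℤ) * q ^ ((s : ℤ) - ℓ) - 1)

open Polynomial

theorem Lagrange.sum_inv_prod_sub_mul_prod_mul_sub_one {F ι κ : Type*} [Field F] [DecidableEq ι]
    {s : Finset ι} {v : ι → F} (hvs : Set.InjOn v s) (t : Finset κ) (c : κ → F)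
    (hcard : #s = #t + 1) :
    ∑ k ∈ s, (∏ j ∈ s.erase k, (v k - v j))⁻¹ * ∏ i ∈ t, (v k * c i - 1) = ∏ i ∈ t, c i := by
  set P : F[X] := ∏ i ∈ t, (C (c i) * X - 1)
  have hlinear : ∀ i ∈ t, (C (c i) * X - 1 : F[X]).natDegree ≤ 1 := fun i _ => by
    compute_degree
  have hdeg : P.degree < #s := by
    refine (degree_le_natDegree).trans_lt ?_
    have hnatDeg : P.natDegree ≤ #t := by
      simpa using (natDegree_prod_le t _).trans (sum_le_card_nsmul t _ 1 hlinear)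
    exact_mod_cast hnatDeg.trans_lt (by omega)
  have hcoeff : P.coeff #t = ∏ i ∈ t, c i := by
    simpa [coeff_one] using coeff_prod_of_natDegree_le t _ 1 hlinear
  rw [← hcoeff, show #t = #s - 1 by omega, Lagrange.coeff_eq_sum hvs hdeg]
  refine sum_congr rfl fun k _ => ?_
  simp only [P, eval_prod, eval_sub, eval_mul, eval_C, eval_X, eval_one, div_eq_inv_mul]
  exact congrArg _ (prod_congr rfl fun i _ => by ring)

theorem prod_range_sub_sub_one_eq_prod_Icc {M : Type*} [CommMonoid M] (f : ℤ → M) (n : ℕ)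
    (ℓ : ℤ) : ∏ i ∈ range n, f ((i : ℤ) - (ℓ - 1)) = ∏ i ∈ Icc 1 n, f ((i : ℤ) - ℓ) := by
  rw [← Ico_add_one_right_eq_Icc, prod_Ico_eq_prod_range, Nat.add_sub_cancel]
  refine prod_congr rfl fun i _ => congrArg f ?_
  push_cast
  ring

theorem prod_Icc_zpow_sub {G : Type*} [CommGroupWithZero G] {q : G} (hq : q ≠ 0) (n : ℕ)
    (ℓ : ℤ) : ∏ i ∈ Icc 1 n, q ^ ((i : ℤ) - ℓ) = (q ^ ((n : ℤ) * ℓ - (n * (n + 1) / 2 : ℕ)))⁻¹ := by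
  induction n with
  | zero => simp
  | succ n ih =>
    have htriangle : (n + 1) * (n + 1 + 1) / 2 = n * (n + 1) / 2 + (n + 1) := by
      have : (n + 1) * (n + 1 + 1) = n * (n + 1) + 2 * (n + 1) := by ring
      omega
    rw [prod_Icc_succ_top (by omega), ih, ← zpow_neg, ← zpow_neg, ← zpow_add₀ hq, htriangle]
    congr 1
    push_cast
    ring

theorem prod_Icc_zpow_mul_zpow_sub_sub_one_eq_zero {K : Type*} [Field K] {q : K}
    (hq : q ≠ 0) {n m : ℕ} {ℓ : ℤ} (hlt : (m : ℤ) < ℓ) (hle : ℓ ≤ m + n) :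
    ∏ i ∈ Icc 1 n, (q ^ (m : ℤ) * q ^ ((i : ℤ) - ℓ) - 1) = 0 := by
  refine prod_eq_zero (i := (ℓ - m).toNat) (by simp only [mem_Icc]; omega) ?_
  rw [← zpow_add₀ hq, show (m : ℤ) + ((ℓ - m).toNat - ℓ) = 0 by omega, zpow_zero, sub_self]

/-- The residue of `F_ℓ` at `t = q ^ a k`. -/
noncomputable def residueF (q : ℝ) (n : ℕ) (a : ℕ → ℕ) (ℓ : ℤ) (k : ℕ) : ℝ :=
  (∏ s ∈ (range (n + 1)).erase k, (q ^ a k - q ^ a s))⁻¹ *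
    ∏ s ∈ Icc 1 n, (q ^ (a k : ℤ) * q ^ ((s : ℤ) - ℓ) - 1)

theorem Hfun_eq (q : ℝ) (n : ℕ) (a : ℕ → ℕ) (ℓ : ℤ) :
    Hfun q n a ℓ = q ^ ((n : ℤ) * ℓ - (n * (n + 1) / 2 : ℕ)) *
      ∑ k ∈ (range (n + 1)).filter (fun k => ℓ ≤ (a k : ℤ)), residueF q n a ℓ k :=
  rfl

theorem Htilde_sub_one_eq {q : ℝ} (hq : q ≠ 0) (n : ℕ) (a : ℕ → ℕ) (ℓ : ℤ) :
    Htilde q n a (ℓ - 1) = q ^ ((n : ℤ) * ℓ - (n * (n + 1) / 2 : ℕ)) *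
      ∑ k ∈ (range (n + 1)).filter (fun k => ¬ ℓ ≤ (a k : ℤ)), residueF q n a ℓ k := by
  have hexp : (n : ℤ) * (ℓ - 1) - (n * (n - 1) / 2 : ℕ) = n * ℓ - (n * (n + 1) / 2 : ℕ) := by
    have htriangle : n * (n + 1) / 2 = n * (n - 1) / 2 + n := by
      rw [← Nat.triangle_succ, Nat.add_sub_cancel, mul_comm]
    rw [htriangle]
    push_cast
    ring
  unfold Htilde
  rw [hexp]
  congr 1
  have hshift : ∀ k, ∏ s ∈ range n, (q ^ (a k : ℤ) * q ^ ((s : ℤ) - (ℓ - 1)) - 1) =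
      ∏ s ∈ Icc 1 n, (q ^ (a k : ℤ) * q ^ ((s : ℤ) - ℓ) - 1) := fun k =>
    prod_range_sub_sub_one_eq_prod_Icc (fun e => q ^ (a k : ℤ) * q ^ e - 1) n ℓ
  simp only [hshift]
  refine sum_subset (fun k hk => ?_) fun k hk hnotFar => ?_
  · simp only [mem_filter] at hk ⊢
    exact ⟨hk.1, by omega⟩
  simp only [mem_filter, not_and] at hk hnotFar
  have hnear := hnotFar hk.1
  rw [prod_Icc_zpow_mul_zpow_sub_sub_one_eq_zero hq (by omega) (by omega), mul_zero]

theorem sum_residueF {q : ℝ} (hq0 : 0 < q) (hq1 : q ≠ 1) (n : ℕ) {a : ℕ → ℕ}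
    (ha : Function.Injective a) (ℓ : ℤ) :
    ∑ k ∈ range (n + 1), residueF q n a ℓ k = ∏ i ∈ Icc 1 n, q ^ ((i : ℤ) - ℓ) := by
  have hinj : Set.InjOn (fun k => q ^ a k) (range (n + 1) : Set ℕ) :=
    ((pow_right_injective₀ hq0 hq1).comp ha).injOn
  simpa only [residueF, zpow_natCast] using
    Lagrange.sum_inv_prod_sub_mul_prod_mul_sub_one hinj (Icc 1 n) (fun i => q ^ ((i : ℤ) - ℓ))
      (by simp)

theorem stmt14_general (n : ℕ) (a : ℕ → ℕ) (hmono : StrictMono a)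
    (q : ℝ) (hq0 : 0 < q) (hq : ∀ m : ℕ, 0 < m → q ^ m ≠ 1)
    (ℓ : ℤ) :
    Hfun q n a ℓ + Htilde q n a (ℓ - 1) = 1 := by
  have hq1 : q ≠ 1 := by simpa using hq 1 one_pos
  rw [Hfun_eq, Htilde_sub_one_eq hq0.ne', ← mul_add, sum_filter_add_sum_filter_not,
    sum_residueF hq0 hq1 n hmono.injective, prod_Icc_zpow_sub hq0.ne',
    mul_inv_cancel₀ (zpow_ne_zero _ hq0.ne')]

/-- For a strictly increasing integer sequence `a_0 = 0 < … < a_n`, `q > 0` not a root of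
unity, and all `0 ≤ ℓ ≤ a_n + n`, one has `H_{n,ℓ}(q) + H̃_{n,ℓ-1}(q) = 1`. -/
theorem stmt14 (n : ℕ) (a : ℕ → ℕ) (ha0 : a 0 = 0) (hmono : StrictMono a)
    (q : ℝ) (hq0 : 0 < q) (hq : ∀ m : ℕ, 0 < m → q ^ m ≠ 1)
    (ℓ : ℤ) (hℓ0 : 0 ≤ ℓ) (hℓ1 : ℓ ≤ (a n : ℤ) + n) :
    Hfun q n a ℓ + Htilde q n a (ℓ - 1) = 1 :=
  stmt14_general n a hmono q hq0 hq ℓ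
end

section
/- Let 𝔮 > 0, 𝔮 ≠ 1, let k >= 1, let p_1,...,p_k >= 1 and γ_1,...,γ_k > 0 with sum γ_i = 1, and let α be the piecewise linear function on [0,1] with α(0)=0 and slope p_i on the i-th piece. Set θ_0 = 0 and θ_i = sum_{j=1}^{i} p_j γ_j. Then for t outside the closed interval with endpoints 1 and 𝔮^{θ_k}, the function x(t) = 𝔮^{-t ∫_0^1 du/(t - 𝔮^{α(u)})} equals 𝔮^{-1} · prod_{i=1}^{k} ((t - 𝔮^{θ_i})/(t - 𝔮^{θ_{i-1}}))^{1/p_i}. -/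
/-!
On the piece where `α` has slope `s`, write `t / (t - 𝔮^α) = 1 + 𝔮^α / (t - 𝔮^α)`: the integrand
has the explicit antiderivative `u - log (t - 𝔮^{α u}) / (s log 𝔮)`. Since every value `𝔮^θ`,
`θ ∈ [0, θ_k]`, lies in the interval with endpoints `1` and `𝔮^{θ_k}` that `t` avoids, all the
`t - 𝔮^{θ_i}` have one sign, so `Real.log` (which is `log |·|`) differentiates correctly and the
differences of logarithms combine into logarithms of the positive ratios. Summing over the pieces,
the `u`-terms add up to `∑ γ_i = 1`, and exponentiating turns the sum of logarithms into the
product of `1/p_i`-th powers.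
-/

open Finset Real

theorem rpow_mem_uIcc {q x y z : ℝ} (hq : 0 < q) (hx : x ∈ Set.uIcc y z) :
    q ^ x ∈ Set.uIcc (q ^ y) (q ^ z) := by
  rcases le_total 1 q with h | h
  · exact (monotone_rpow_of_base_ge_one h).mapsTo_uIcc hx
  · exact (antitone_rpow_of_base_le_one hq h).mapsTo_uIcc hx

theorem div_pos_of_notMem_uIcc {t x y a b : ℝ} (ht : t ∉ Set.uIcc a b) (hx : x ∈ Set.uIcc a b)
    (hy : y ∈ Set.uIcc a b) : 0 < (t - x) / (t - y) := by
  rw [Set.uIcc, Set.mem_Icc] at ht hx hy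
  rcases not_and_or.mp ht with h | h
  · exact div_pos_of_neg_of_neg (by linarith) (by linarith)
  · exact div_pos (by linarith) (by linarith)

theorem sum_Icc_one_mem_Icc {M : Type*} [AddCommMonoid M] [PartialOrder M] [IsOrderedAddMonoid M]
    {f : ℕ → M} {i k : ℕ} (hf : ∀ j ∈ Icc 1 k, 0 ≤ f j) (hi : i ≤ k) :
    ∑ j ∈ Icc 1 i, f j ∈ Set.Icc 0 (∑ j ∈ Icc 1 k, f j) :=
  ⟨sum_nonneg fun j hj => hf j (Icc_subset_Icc_right hi hj),
    sum_le_sum_of_subset_of_nonneg (Icc_subset_Icc_right hi) fun j hj _ => hf j hj⟩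

theorem prod_Icc_one_eq_prod_range {M : Type*} [CommMonoid M] (f : ℕ → M) (k : ℕ) :
    ∏ i ∈ Icc 1 k, f i = ∏ i ∈ range k, f (i + 1) := by
  rw [range_eq_Ico, prod_Ico_add' f 0 k 1]
  rfl

theorem rpow_log_div_mul_log {q r : ℝ} (hq : 0 < q) (hq1 : q ≠ 1) (hr : 0 < r) (s : ℝ) :
    q ^ (log r / (s * log q)) = r ^ (1 / s) := by
  rw [rpow_def_of_pos hq, rpow_def_of_pos hr]
  congr 1
  field_simp [log_ne_zero_of_pos_of_ne_one hq hq1]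

theorem rpow_neg_one_sub_sum_log_sub_log {ι : Type*} {q : ℝ} (hq : 0 < q) (hq1 : q ≠ 1)
    {S : Finset ι} {x y : ι → ℝ} (hxy : ∀ i ∈ S, 0 < x i / y i) (s : ι → ℝ) :
    q ^ (-(1 - ∑ i ∈ S, (log (x i) - log (y i)) / (s i * log q))) =
      q⁻¹ * ∏ i ∈ S, (x i / y i) ^ (1 / s i) := by
  rw [neg_sub, rpow_sub hq, rpow_one, rpow_sum_of_pos hq, div_eq_inv_mul]
  congr 1
  refine prod_congr rfl fun i hi => ?_
  obtain ⟨hx, hy⟩ := div_ne_zero_iff.mp (hxy i hi).ne'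
  rw [← log_div hx hy, rpow_log_div_mul_log hq hq1 (hxy i hi)]

theorem continuousOn_mul_inv_sub_rpow_affine {q t s c a : ℝ} {S : Set ℝ} (hq : 0 < q)
    (hne : ∀ u ∈ S, t - q ^ (s * (u - a) + c) ≠ 0) :
    ContinuousOn (fun u => t * (t - q ^ (s * (u - a) + c))⁻¹) S :=
  continuousOn_const.mul <| ContinuousOn.inv₀
    (continuous_const.sub (continuous_const.rpow (by fun_prop) fun _ => .inl hq.ne')).continuousOn
    hne

theorem integral_mul_inv_sub_rpow_affine {q t s c a b : ℝ} (hq : 0 < q) (hs : s * log q ≠ 0)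
    (hne : ∀ u ∈ Set.uIcc a b, t - q ^ (s * (u - a) + c) ≠ 0) :
    ∫ u in a..b, t * (t - q ^ (s * (u - a) + c))⁻¹ =
      b - a - (log (t - q ^ (s * (b - a) + c)) - log (t - q ^ c)) / (s * log q) := by
  rw [intervalIntegral.integral_eq_sub_of_hasDerivAt
    (f := fun u => u - log (t - q ^ (s * (u - a) + c)) / (s * log q)) _
    (continuousOn_mul_inv_sub_rpow_affine hq hne).intervalIntegrable]
  · simp only [sub_self, mul_zero, zero_add]
    ring
  intro u hu
  have hlin : HasDerivAt (fun u => s * (u - a) + c) s u := by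
    simpa using (((hasDerivAt_id u).sub_const a).const_mul s).add_const c
  have hlog := ((hlin.const_rpow hq).const_sub t).log (hne u hu)
  refine ((hasDerivAt_id' u).sub (hlog.div_const (s * log q))).congr_deriv ?_
  field_simp [hne u hu, left_ne_zero_of_mul hs, right_ne_zero_of_mul hs]
  ring

theorem mul_integral_inv_sub_rpow_of_piecewise_affine {q t : ℝ} {α : ℝ → ℝ} {k : ℕ}
    {a θ s : ℕ → ℝ} (hq : 0 < q) (hq1 : q ≠ 1) (ha : ∀ i < k, a i ≤ a (i + 1))
    (hs : ∀ i < k, s i ≠ 0)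
    (hα : ∀ i < k, ∀ u ∈ Set.Icc (a i) (a (i + 1)), α u = s i * (u - a i) + θ i)
    (hθ : ∀ i < k, θ (i + 1) = s i * (a (i + 1) - a i) + θ i)
    (hne : ∀ i < k, ∀ u ∈ Set.Icc (a i) (a (i + 1)), t - q ^ α u ≠ 0) :
    t * ∫ u in a 0..a k, (t - q ^ α u)⁻¹ =
      a k - a 0 - ∑ i ∈ range k, (log (t - q ^ θ (i + 1)) - log (t - q ^ θ i)) / (s i * log q) := by
  have hpiece : ∀ i < k, Set.EqOn (fun u => t * (t - q ^ α u)⁻¹)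
      (fun u => t * (t - q ^ (s i * (u - a i) + θ i))⁻¹) (Set.uIcc (a i) (a (i + 1))) :=
    fun i hi u hu => by
      rw [Set.uIcc_of_le (ha i hi)] at hu
      simp only [hα i hi u hu]
  have hne_affine : ∀ i < k, ∀ u ∈ Set.uIcc (a i) (a (i + 1)),
      t - q ^ (s i * (u - a i) + θ i) ≠ 0 :=
    fun i hi u hu => by
      rw [Set.uIcc_of_le (ha i hi)] at hu
      simpa only [hα i hi u hu] using hne i hi u hu
  have hint : ∀ i < k, IntervalIntegrable (fun u => t * (t - q ^ α u)⁻¹) MeasureTheory.volume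
      (a i) (a (i + 1)) := fun i hi =>
    ((continuousOn_mul_inv_sub_rpow_affine hq (hne_affine i hi)).congr
      (hpiece i hi)).intervalIntegrable
  rw [← intervalIntegral.integral_const_mul,
    ← intervalIntegral.sum_integral_adjacent_intervals hint, ← sum_range_sub a, ← sum_sub_distrib]
  refine sum_congr rfl fun i hi => ?_
  have hi := mem_range.mp hi
  rw [intervalIntegral.integral_congr (hpiece i hi), integral_mul_inv_sub_rpow_affine hq
    (mul_ne_zero (hs i hi) (log_ne_zero_of_pos_of_ne_one hq hq1)) (hne_affine i hi), hθ i hi]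

theorem piecewise_eq_affine {α : ℝ → ℝ} {k : ℕ} {p γ : ℕ → ℝ}
    (hα : ∀ i ∈ Icc 1 k, ∀ u ∈ Set.Icc (∑ j ∈ Icc 1 (i - 1), γ j) (∑ j ∈ Icc 1 i, γ j),
      α u = p i * u + ∑ j ∈ Icc 1 (i - 1), (p j - p i) * γ j) :
    ∀ i < k, ∀ u ∈ Set.Icc (∑ j ∈ Icc 1 i, γ j) (∑ j ∈ Icc 1 (i + 1), γ j),
      α u = p (i + 1) * (u - ∑ j ∈ Icc 1 i, γ j) + ∑ j ∈ Icc 1 i, p j * γ j := by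
  intro i hi u hu
  rw [hα (i + 1) (mem_Icc.mpr ⟨by omega, hi⟩) u (by simpa using hu), Nat.add_sub_cancel]
  simp only [sub_mul, sum_sub_distrib, ← mul_sum]
  ring

theorem mul_integral_inv_sub_rpow_eq_one_sub_sum {q t : ℝ} {α : ℝ → ℝ} {k : ℕ} {p γ : ℕ → ℝ}
    (hq : 0 < q) (hq1 : q ≠ 1) (hp : ∀ i ∈ Icc 1 k, 0 < p i) (hγ : ∀ i ∈ Icc 1 k, 0 ≤ γ i)
    (hsum : ∑ i ∈ Icc 1 k, γ i = 1)
    (hα : ∀ i ∈ Icc 1 k, ∀ u ∈ Set.Icc (∑ j ∈ Icc 1 (i - 1), γ j) (∑ j ∈ Icc 1 i, γ j),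
      α u = p i * u + ∑ j ∈ Icc 1 (i - 1), (p j - p i) * γ j)
    (hne : ∀ θ ∈ Set.Icc 0 (∑ j ∈ Icc 1 k, p j * γ j), t - q ^ θ ≠ 0) :
    t * ∫ u in (0:ℝ)..1, (t - q ^ α u)⁻¹ =
      1 - ∑ i ∈ range k, (log (t - q ^ (∑ j ∈ Icc 1 (i + 1), p j * γ j)) -
        log (t - q ^ (∑ j ∈ Icc 1 i, p j * γ j))) / (p (i + 1) * log q) := by
  set A : ℕ → ℝ := fun i => ∑ j ∈ Icc 1 i, γ j
  set Θ : ℕ → ℝ := fun i => ∑ j ∈ Icc 1 i, p j * γ j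
  have hmem : ∀ i < k, i + 1 ∈ Icc 1 k := fun i hi => mem_Icc.mpr ⟨by omega, hi⟩
  have hA_succ (i : ℕ) : A (i + 1) = A i + γ (i + 1) := sum_Icc_succ_top (by omega) _
  have hΘ_succ (i : ℕ) : Θ (i + 1) = Θ i + p (i + 1) * γ (i + 1) := sum_Icc_succ_top (by omega) _
  have hΘ_mem : ∀ i ≤ k, Θ i ∈ Set.Icc 0 (Θ k) := fun i hi =>
    sum_Icc_one_mem_Icc (fun j hj => mul_nonneg (hp j hj).le (hγ j hj)) hi
  have hα_mem : ∀ i < k, ∀ u ∈ Set.Icc (A i) (A (i + 1)), α u ∈ Set.Icc 0 (Θ k) := by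
    intro i hi u hu
    have hp1 := hp _ (hmem i hi)
    rw [piecewise_eq_affine hα i hi u hu]
    rw [hA_succ] at hu
    constructor
    · nlinarith [(hΘ_mem i hi.le).1, hu.1]
    · nlinarith [(hΘ_mem (i + 1) hi).2, hΘ_succ i, hu.2]
  have h := mul_integral_inv_sub_rpow_of_piecewise_affine (a := A) (θ := Θ)
    (s := fun i => p (i + 1)) hq hq1
    (fun i hi => by rw [hA_succ]; linarith [hγ _ (hmem i hi)])
    (fun i hi => (hp _ (hmem i hi)).ne') (piecewise_eq_affine hα)
    (fun i _ => by rw [hΘ_succ, hA_succ]; ring) (fun i hi u hu => hne _ (hα_mem i hi u hu))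
  rwa [show A 0 = 0 by simp [A], show A k = 1 from hsum, sub_zero] at h

theorem stmt18_general (𝔮 : ℝ) (hq0 : 0 < 𝔮) (hq1 : 𝔮 ≠ 1) (k : ℕ)
    (p γ : ℕ → ℝ)
    (hp : ∀ i ∈ Finset.Icc 1 k, 1 ≤ p i)
    (hγ : ∀ i ∈ Finset.Icc 1 k, 0 < γ i)
    (hsum : ∑ i ∈ Finset.Icc 1 k, γ i = 1)
    (α : ℝ → ℝ)
    (hα : ∀ i ∈ Finset.Icc 1 k,
      ∀ u ∈ Set.Icc (∑ j ∈ Finset.Icc 1 (i - 1), γ j) (∑ j ∈ Finset.Icc 1 i, γ j),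
        α u = p i * u + ∑ j ∈ Finset.Icc 1 (i - 1), (p j - p i) * γ j)
    (t : ℝ)
    (ht : t ∉ Set.uIcc 1 (𝔮 ^ (∑ j ∈ Finset.Icc 1 k, p j * γ j))) :
    𝔮 ^ (-(t * ∫ u in (0:ℝ)..1, (t - 𝔮 ^ α u)⁻¹)) =
      𝔮⁻¹ * ∏ i ∈ Finset.Icc 1 k,
        ((t - 𝔮 ^ (∑ j ∈ Finset.Icc 1 i, p j * γ j)) /
            (t - 𝔮 ^ (∑ j ∈ Finset.Icc 1 (i - 1), p j * γ j))) ^ (1 / p i) := by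
  have hθ_mem : ∀ i ≤ k, ∑ j ∈ Icc 1 i, p j * γ j ∈ Set.Icc 0 (∑ j ∈ Icc 1 k, p j * γ j) :=
    fun i hi =>
      sum_Icc_one_mem_Icc (fun j hj => mul_nonneg (zero_le_one.trans (hp j hj)) (hγ j hj).le) hi
  have hq_mem : ∀ θ ∈ Set.Icc 0 (∑ j ∈ Icc 1 k, p j * γ j),
      𝔮 ^ θ ∈ Set.uIcc 1 (𝔮 ^ (∑ j ∈ Icc 1 k, p j * γ j)) := fun θ hθ => by
    simpa using rpow_mem_uIcc hq0 (Set.Icc_subset_uIcc hθ)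
  have hne : ∀ θ ∈ Set.Icc 0 (∑ j ∈ Icc 1 k, p j * γ j), t - 𝔮 ^ θ ≠ 0 := fun θ hθ =>
    sub_ne_zero.mpr (ne_of_mem_of_not_mem (hq_mem θ hθ) ht).symm
  rw [mul_integral_inv_sub_rpow_eq_one_sub_sum hq0 hq1 (fun i hi => one_pos.trans_le (hp i hi))
      (fun i hi => (hγ i hi).le) hsum hα hne, prod_Icc_one_eq_prod_range]
  simp only [Nat.add_sub_cancel]
  exact rpow_neg_one_sub_sum_log_sub_log hq0 hq1 (fun i hi => div_pos_of_notMem_uIcc ht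
    (hq_mem _ (hθ_mem _ (mem_range.mp hi))) (hq_mem _ (hθ_mem _ (mem_range.mp hi).le))) _

/-- For a piecewise linear starting-point distribution `α` with slopes `p_i ≥ 1` on pieces
of widths `γ_i > 0` summing to `1`, setting `θ_i = ∑_{j=1}^{i} p_j γ_j`, for `t` outside the
closed interval with endpoints `1` and `𝔮^{θ_k}`, the function
`x(t) = 𝔮^{-t ∫₀¹ du/(t-𝔮^{α(u)})}` equals
`𝔮⁻¹ ∏_{i=1}^{k} ((t-𝔮^{θ_i})/(t-𝔮^{θ_{i-1}}))^{1/p_i}`. -/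
theorem stmt18 (𝔮 : ℝ) (hq0 : 0 < 𝔮) (hq1 : 𝔮 ≠ 1) (k : ℕ) (hk : 1 ≤ k)
    (p γ : ℕ → ℝ)
    (hp : ∀ i ∈ Finset.Icc 1 k, 1 ≤ p i)
    (hγ : ∀ i ∈ Finset.Icc 1 k, 0 < γ i)
    (hsum : ∑ i ∈ Finset.Icc 1 k, γ i = 1)
    (α : ℝ → ℝ) (hα0 : α 0 = 0)
    (hα : ∀ i ∈ Finset.Icc 1 k,
      ∀ u ∈ Set.Icc (∑ j ∈ Finset.Icc 1 (i - 1), γ j) (∑ j ∈ Finset.Icc 1 i, γ j),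
        α u = p i * u + ∑ j ∈ Finset.Icc 1 (i - 1), (p j - p i) * γ j)
    (t : ℝ)
    (ht : t ∉ Set.uIcc 1 (𝔮 ^ (∑ j ∈ Finset.Icc 1 k, p j * γ j))) :
    𝔮 ^ (-(t * ∫ u in (0:ℝ)..1, (t - 𝔮 ^ α u)⁻¹)) =
      𝔮⁻¹ * ∏ i ∈ Finset.Icc 1 k,
        ((t - 𝔮 ^ (∑ j ∈ Finset.Icc 1 i, p j * γ j)) /
            (t - 𝔮 ^ (∑ j ∈ Finset.Icc 1 (i - 1), p j * γ j))) ^ (1 / p i) :=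
  stmt18_general 𝔮 hq0 hq1 k p γ hp hγ hsum α hα t ht
end
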